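/- arXiv:2006.02746 — 6 statements merged into one kernel-verified Lean document; each statement's English description precedes it below -/
import Mathlib

section
/- Let x and y be unitary operators on H such that for all vectors ξ, η, ζ ∈ H one has ⟪y η, ζ⟫ • (x ξ) = ⟪x η, ζ⟫ • (y ξ) (this is the equality x ⊗ (y*)ᵀ = y ⊗ (x*)ᵀ on H ⊗ H̄, evaluated against rank-one operators). Then the operators x y* and y* x are both selfadjoint. -/
/-!
Evaluating the hypothesis at `ζ = y η` for a vector with `y η ≠ 0` shows `x = c • y` with
`c = ⟪x η, y η⟫ / ‖y η‖²`. Feeding `x = c • y` back in at `ξ = η`, `ζ = y η` gives `c = conj c`.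
Then `x y* = c • y y*` and `y* x = c • y* y` are real multiples of selfadjoint operators;
if `y = 0` both products vanish.
-/

open ContinuousLinearMap

section

variable {𝕜 E F : Type*} [RCLike 𝕜] [NormedAddCommGroup E] [NormedSpace 𝕜 E]
  [NormedAddCommGroup F] [InnerProductSpace 𝕜 F] {x y : E →L[𝕜] F}

theorem eq_smul_of_inner_smul_eq (h : ∀ ξ η ζ, inner 𝕜 (y η) ζ • x ξ = inner 𝕜 (x η) ζ • y ξ)
    {η : E} (hη : y η ≠ 0) :
    x = (inner 𝕜 (x η) (y η) / inner 𝕜 (y η) (y η)) • y := by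
  have hnorm : inner 𝕜 (y η) (y η) ≠ 0 := inner_self_ne_zero.mpr hη
  ext ξ
  rw [smul_apply, div_eq_inv_mul, mul_smul, ← h ξ η (y η), inv_smul_smul₀ hnorm]

theorem exists_isSelfAdjoint_smul_eq_of_inner_smul_eq
    (h : ∀ ξ η ζ, inner 𝕜 (y η) ζ • x ξ = inner 𝕜 (x η) ζ • y ξ) (hy : y ≠ 0) :
    ∃ c : 𝕜, IsSelfAdjoint c ∧ x = c • y := by
  obtain ⟨η, hη⟩ : ∃ η, y η ≠ 0 := by
    by_contra! hzero
    exact hy (ext hzero)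
  set c := inner 𝕜 (x η) (y η) / inner 𝕜 (y η) (y η)
  have hx : x = c • y := eq_smul_of_inner_smul_eq h hη
  refine ⟨c, ?_, hx⟩
  have hnorm : inner 𝕜 (y η) (y η) ≠ 0 := inner_self_ne_zero.mpr hη
  have hcoeff : (inner 𝕜 (y η) (y η) * c) • y η = (star c * inner 𝕜 (y η) (y η)) • y η := by
    have := h η η (y η)
    rwa [hx, smul_apply, inner_smul_left, smul_smul] at this
  exact (mul_left_cancel₀ hnorm ((smul_left_injective 𝕜 hη hcoeff).trans (mul_comm _ _))).symm

end

theorem stmt_0_general {H : Type*} [NormedAddCommGroup H] [InnerProductSpace ℂ H] [CompleteSpace H]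
    (x y : H →L[ℂ] H)
    (h : ∀ ξ η ζ : H, (inner ℂ (y η) ζ : ℂ) • x ξ = (inner ℂ (x η) ζ : ℂ) • y ξ) :
    IsSelfAdjoint (x * star y) ∧ IsSelfAdjoint (star y * x) := by
  rcases eq_or_ne y 0 with rfl | hy
  · simp
  obtain ⟨c, hc, rfl⟩ := exists_isSelfAdjoint_smul_eq_of_inner_smul_eq h hy
  rw [smul_mul_assoc, mul_smul_comm]
  exact ⟨hc.smul (.mul_star_self y), hc.smul (.star_mul_self y)⟩

/-- Part 1 of Lemma 6.1: if `x ⊗ (y*)ᵀ = y ⊗ (x*)ᵀ` (evaluated against rank-one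
operators), then `x y*` and `y* x` are selfadjoint. -/
theorem stmt_0 {H : Type*} [NormedAddCommGroup H] [InnerProductSpace ℂ H] [CompleteSpace H]
    (x y : H →L[ℂ] H)
    (hx : x ∈ unitary (H →L[ℂ] H)) (hy : y ∈ unitary (H →L[ℂ] H))
    (h : ∀ ξ η ζ : H, (inner ℂ (y η) ζ : ℂ) • x ξ = (inner ℂ (x η) ζ : ℂ) • y ξ) :
    IsSelfAdjoint (x * star y) ∧ IsSelfAdjoint (star y * x) :=
  stmt_0_general x y h
end

section
/- Let a, b : ℝ → B(H) be strongly continuous one-parameter groups of unitary operators on H (a₀ = b₀ = 1, a_{s+t} = a_s a_t, b_{s+t} = b_s b_t, and t ↦ a_t ξ, t ↦ b_t ξ are continuous for every ξ ∈ H). Suppose that for every t ∈ ℝ and every bounded operator T on H one has a_t T b_t = b_t* T a_t*. Then a_t = b_{-t} for all t ∈ ℝ. -/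
/-! With `c t = b t * a t`, the hypothesis and unitarity give `c t * T * c t = T` for every `T`.
Taking `T = 1` shows `c t * c t = 1`, and then `c t` is central. Centrality makes `c` a
homomorphism `ℝ → B(H)`, so `c t = c (t/2) * c (t/2) = 1`, i.e. `a t = (b t)⁻¹ = b (-t)`. -/

section Monoid

variable {M : Type*} [Monoid M]

theorem mul_mul_mul_eq_self_of_forall_mul_mul_eq {a a' b b' : M} (hb : b * b' = 1)
    (ha : a' * a = 1) (h : ∀ T, a * T * b = b' * T * a') (T : M) :
    b * a * T * (b * a) = T :=
  calc b * a * T * (b * a) = b * (a * T * b) * a := by simp only [mul_assoc]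
    _ = b * b' * T * (a' * a) := by rw [h]; simp only [mul_assoc]
    _ = T := by rw [hb, ha, one_mul, mul_one]

theorem mul_self_eq_one_of_forall_mul_mul_eq_self {u : M} (hu : ∀ T, u * T * u = T) :
    u * u = 1 := by
  simpa using hu 1

theorem commute_of_forall_mul_mul_eq_self {u : M} (hu : ∀ T, u * T * u = T) (T : M) :
    Commute u T :=
  calc u * T = u * T * (u * u) := by rw [mul_self_eq_one_of_forall_mul_mul_eq_self hu, mul_one]
    _ = u * T * u * u := by simp only [mul_assoc]
    _ = T * u := by rw [hu]

theorem map_add_mul_map_add_of_commute {G : Type*} [AddCommMagma G] {a b : G → M}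
    (ha : ∀ s t, a (s + t) = a s * a t) (hb : ∀ s t, b (s + t) = b s * b t)
    (hcomm : ∀ t T, Commute (b t * a t) T) (s t : G) :
    b (s + t) * a (s + t) = b s * a s * (b t * a t) :=
  calc b (s + t) * a (s + t) = b s * (b t * a t) * a s := by
        rw [hb, add_comm, ha]; simp only [mul_assoc]
    _ = b s * a s * (b t * a t) := by rw [mul_assoc, (hcomm t (a s)).eq, mul_assoc]

theorem eq_one_of_map_add_of_mul_self_eq_one {c : ℝ → M}
    (hadd : ∀ s t, c (s + t) = c s * c t) (hsq : ∀ t, c t * c t = 1) (t : ℝ) : c t = 1 := by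
  rw [← add_halves t, hadd, hsq]

end Monoid

theorem stmt_2_general {H : Type*} [NormedAddCommGroup H] [InnerProductSpace ℂ H] [CompleteSpace H]
    (a b : ℝ → (H →L[ℂ] H))
    (ha : ∀ t, a t ∈ unitary (H →L[ℂ] H)) (hb : ∀ t, b t ∈ unitary (H →L[ℂ] H))
    (haadd : ∀ s t : ℝ, a (s + t) = a s * a t)
    (hb0 : b 0 = 1) (hbadd : ∀ s t : ℝ, b (s + t) = b s * b t)
    (h : ∀ (t : ℝ) (T : H →L[ℂ] H), a t * T * b t = star (b t) * T * star (a t)) :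
    ∀ t : ℝ, a t = b (-t) := by
  have hsandwich : ∀ t T, b t * a t * T * (b t * a t) = T := fun t =>
    mul_mul_mul_eq_self_of_forall_mul_mul_eq (Unitary.mul_star_self_of_mem (hb t))
      (Unitary.star_mul_self_of_mem (ha t)) (h t)
  have hinv : ∀ t, b t * a t = 1 :=
    eq_one_of_map_add_of_mul_self_eq_one (c := fun t => b t * a t)
      (map_add_mul_map_add_of_commute haadd hbadd
        fun t => commute_of_forall_mul_mul_eq_self (hsandwich t))
      fun t => mul_self_eq_one_of_forall_mul_mul_eq_self (hsandwich t)
  intro t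
  calc a t = b (-t) * (b t * a t) := by rw [← mul_assoc, ← hbadd, neg_add_cancel, hb0, one_mul]
    _ = b (-t) := by rw [hinv, mul_one]

/-- Part 3 of Lemma 6.1: if `(a_t)`, `(b_t)` are strongly continuous unitary groups and
`J c_t = c_t J`, i.e. `a_t T b_t = b_t* T a_t*` for all `T`, then `a_t = b_{-t}`. -/
theorem stmt_2 {H : Type*} [NormedAddCommGroup H] [InnerProductSpace ℂ H] [CompleteSpace H]
    (a b : ℝ → (H →L[ℂ] H))
    (ha : ∀ t, a t ∈ unitary (H →L[ℂ] H)) (hb : ∀ t, b t ∈ unitary (H →L[ℂ] H))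
    (ha0 : a 0 = 1) (haadd : ∀ s t : ℝ, a (s + t) = a s * a t)
    (hb0 : b 0 = 1) (hbadd : ∀ s t : ℝ, b (s + t) = b s * b t)
    (hacont : ∀ ξ : H, Continuous fun t => a t ξ)
    (hbcont : ∀ ξ : H, Continuous fun t => b t ξ)
    (h : ∀ (t : ℝ) (T : H →L[ℂ] H), a t * T * b t = star (b t) * T * star (a t)) :
    ∀ t : ℝ, a t = b (-t) :=
  stmt_2_general a b ha hb haadd hb0 hbadd h
end

section
/- Let H be a nonzero separable complex Hilbert space and let c ∈ ℝ with c ≠ 0. Let U, V : ℝ → B(H) be families of unitary operators satisfying the Weyl-type commutation relation U_s V_t = exp(i c s t) V_t U_s for all s, t ∈ ℝ. Then there is no nonzero vector ξ ∈ H and no real number e such that U_s ξ = exp(i e s) ξ for all s ∈ ℝ; in other words, the one-parameter family (U_s) has no common eigenvector with eigenvalue character of the form s ↦ exp(i e s). -/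
/-!
The commutation relation makes `V t ξ` an eigenvector of every `U s` with character
`s ↦ exp(i (c t + e) s)`. For `t ≠ t'` these characters differ by the sign `-1` at
`s = π / (c (t' - t))`, so unitarity of that `U s` makes `V t ξ` and `V t' ξ` orthogonal.
This gives an uncountable orthogonal family of nonzero vectors, which a separable space
cannot carry.
-/

open scoped InnerProductSpace ComplexConjugate

open Complex

theorem Pairwise.countable_of_inner_eq_zero {𝕜 E ι : Type*} [RCLike 𝕜] [NormedAddCommGroup E]
    [InnerProductSpace 𝕜 E] [TopologicalSpace.SeparableSpace E] {v : ι → E}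
    (hv : ∀ i, v i ≠ 0) (horth : Pairwise fun i j => ⟪v i, v j⟫_𝕜 = 0) : Countable ι := by
  refine Pairwise.countable_of_isOpen_disjoint (s := fun i => Metric.ball (v i) (‖v i‖ / 2))
    (fun i j hij => Metric.ball_disjoint_ball ?_) (fun _ => Metric.isOpen_ball)
    (fun i => Metric.nonempty_ball.2 (by simpa using hv i))
  have hpyth : dist (v i) (v j) ^ 2 = ‖v i‖ ^ 2 + ‖v j‖ ^ 2 := by
    rw [dist_eq_norm, @norm_sub_sq 𝕜, horth hij]
    simp
  nlinarith [sq_nonneg (‖v i‖ - ‖v j‖), dist_nonneg (x := v i) (y := v j)]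

theorem ContinuousLinearMap.apply_apply_eq_smul_of_mul_eq_smul_mul {R M : Type*} [CommRing R]
    [TopologicalSpace M] [AddCommGroup M] [Module R M] [ContinuousConstSMul R M]
    {A B : M →L[R] M} {z w : R} {x : M} (hAB : A * B = z • (B * A)) (hx : A x = w • x) :
    A (B x) = (z * w) • B x := by
  rw [← mul_apply_eq_comp, hAB, smul_apply, mul_apply_eq_comp, hx, map_smul, smul_smul]

theorem ContinuousLinearMap.inner_eq_zero_of_mem_unitary_of_apply_eq_smul {𝕜 H : Type*}
    [RCLike 𝕜] [NormedAddCommGroup H] [InnerProductSpace 𝕜 H] [CompleteSpace H]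
    {u : H →L[𝕜] H} (hu : u ∈ unitary (H →L[𝕜] H)) {a b : 𝕜} {x y : H}
    (hx : u x = a • x) (hy : u y = b • y) (hab : conj a * b ≠ 1) : ⟪x, y⟫_𝕜 = 0 := by
  have h := u.inner_map_map_of_mem_unitary hu x y
  rw [hx, hy, inner_smul_left, inner_smul_right, ← mul_assoc] at h
  have : (1 - conj a * b) * ⟪x, y⟫_𝕜 = 0 := by linear_combination -h
  exact (mul_eq_zero.1 this).resolve_left (sub_ne_zero.2 hab.symm)

theorem Complex.conj_exp_mul_I_mul_exp_mul_I (x y : ℝ) :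
    conj (exp (I * x)) * exp (I * y) = exp (I * (y - x : ℝ)) := by
  rw [← exp_conj, ← exp_add, map_mul, conj_I, conj_ofReal]
  push_cast
  ring_nf

theorem stmt_3_general {H : Type*} [NormedAddCommGroup H] [InnerProductSpace ℂ H] [CompleteSpace H]
    [TopologicalSpace.SeparableSpace H]
    (c : ℝ) (hc : c ≠ 0)
    (U V : ℝ → (H →L[ℂ] H))
    (hU : ∀ s, U s ∈ unitary (H →L[ℂ] H)) (hV : ∀ t, V t ∈ unitary (H →L[ℂ] H))
    (hcomm : ∀ s t : ℝ, U s * V t = Complex.exp (Complex.I * (c * s * t : ℝ)) • (V t * U s)) :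
    ¬ ∃ (ξ : H) (e : ℝ), ξ ≠ 0 ∧ ∀ s : ℝ, U s ξ = Complex.exp (Complex.I * (e * s : ℝ)) • ξ := by
  rintro ⟨ξ, e, hξ, heig⟩
  have hvec : ∀ s t, U s (V t ξ) = exp (I * ((c * t + e) * s : ℝ)) • V t ξ := fun s t => by
    rw [(U s).apply_apply_eq_smul_of_mul_eq_smul_mul (hcomm s t) (heig s), ← exp_add]
    push_cast
    ring_nf
  have horth : Pairwise fun t t' => ⟪V t ξ, V t' ξ⟫_ℂ = 0 := fun t t' htt' => by
    have hden : c * (t' - t) ≠ 0 := mul_ne_zero hc (sub_ne_zero.2 (Ne.symm htt'))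
    refine (U _).inner_eq_zero_of_mem_unitary_of_apply_eq_smul (hU (Real.pi / (c * (t' - t))))
      (hvec _ t) (hvec _ t') ?_
    rw [conj_exp_mul_I_mul_exp_mul_I, show (c * t' + e) * (Real.pi / (c * (t' - t)))
      - (c * t + e) * (Real.pi / (c * (t' - t))) = Real.pi by field_simp; ring,
      mul_comm, exp_pi_mul_I]
    norm_num
  have hne : ∀ t, V t ξ ≠ 0 := fun t => by
    rw [← norm_ne_zero_iff, (V t).norm_map_of_mem_unitary (hV t), norm_ne_zero_iff]
    exact hξ
  have := horth.countable_of_inner_eq_zero hne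
  exact Cardinal.not_countable_real Set.countable_univ

/-- Operator-theoretic core of Corollary 4.4: a Weyl-type commutation relation
`U_s V_t = exp(i c s t) V_t U_s` with `c ≠ 0` on a nonzero separable Hilbert space
forces `(U_s)` to have no common eigenvector with character `s ↦ exp(i e s)`. -/
theorem stmt_3 {H : Type*} [NormedAddCommGroup H] [InnerProductSpace ℂ H] [CompleteSpace H]
    [Nontrivial H] [TopologicalSpace.SeparableSpace H]
    (c : ℝ) (hc : c ≠ 0)
    (U V : ℝ → (H →L[ℂ] H))
    (hU : ∀ s, U s ∈ unitary (H →L[ℂ] H)) (hV : ∀ t, V t ∈ unitary (H →L[ℂ] H))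
    (hcomm : ∀ s t : ℝ, U s * V t = Complex.exp (Complex.I * (c * s * t : ℝ)) • (V t * U s)) :
    ¬ ∃ (ξ : H) (e : ℝ), ξ ≠ 0 ∧ ∀ s : ℝ, U s ξ = Complex.exp (Complex.I * (e * s : ℝ)) • ξ :=
  stmt_3_general c hc U V hU hV hcomm
end

section
/- For all l, n, m ∈ ℕ one has ∫_𝕋 (1 − q²) ∑_{k=0}^∞ q^{2k} ⟪e_k, A^l C_λ^n (C_λ*)^m e_k⟫ dμ(λ) = δ_{l,0} δ_{n,m} (1 − q²)/(1 − q^{2(n+1)}), where δ denotes the Kronecker delta. (This computes the Haar state of SU_q(2) on the basis monomial α^l γ^n γ^{*m} through the representations ψ^{2,λ} and shows that the map Q_L is isometric on these monomials.) -/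
/-!
`C_λ` is diagonal with eigenvalues `λ q^k`, so `C_λ^n (C_λ^*)^m e_k = λ^n λ̄^m q^{k(n+m)} e_k`,
while `A` is a weighted backward shift, so `⟪e_k, A^l e_k⟫ = δ_{l,0}`. The weighted trace is
therefore `δ_{l,0} λ^n λ̄^m (1 - q^2) / (1 - q^{n+m+2})`, a geometric series, and averaging
`λ^n λ̄^m = λ^{n-m}` over the circle gives `δ_{n,m}`.
-/

open scoped ComplexConjugate InnerProductSpace

theorem ContinuousLinearMap.pow_apply_of_apply_eq_smul {𝕜 E : Type*} [NormedField 𝕜]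
    [NormedAddCommGroup E] [NormedSpace 𝕜 E] {T : E →L[𝕜] E} {v : E} {c : 𝕜}
    (h : T v = c • v) (n : ℕ) : (T ^ n) v = c ^ n • v := by
  induction n with
  | zero => simp
  | succ n ih => rw [pow_succ', mul_apply_eq_comp, ih, map_smul, h, smul_smul, pow_succ]

namespace lp

section Basis

variable {ι 𝕜 : Type*} [RCLike 𝕜] [DecidableEq ι]

theorem inner_single_one_single_one (i j : ι) :
    ⟪lp.single (E := fun _ : ι => 𝕜) 2 i 1, lp.single 2 j 1⟫_𝕜 = if i = j then 1 else 0 := by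
  rw [inner_single_left, lp.single_apply]
  split_ifs with h
  · subst h; simp
  · simp [Pi.single_eq_of_ne h]

theorem star_apply_single_of_apply_single
    {T : lp (fun _ : ι => 𝕜) 2 →L[𝕜] lp (fun _ : ι => 𝕜) 2} {c : ι → 𝕜}
    (hT : ∀ i, T (lp.single 2 i 1) = c i • lp.single 2 i 1) (i : ι) :
    (star T) (lp.single 2 i 1) = conj (c i) • lp.single 2 i 1 := by
  ext j
  have hcoord : ∀ f : lp (fun _ : ι => 𝕜) 2, f j = ⟪lp.single 2 j (1 : 𝕜), f⟫_𝕜 := fun f => by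
    simp [inner_single_left]
  rw [hcoord, hcoord, ContinuousLinearMap.star_eq_adjoint,
    ContinuousLinearMap.adjoint_inner_right, hT, inner_smul_left, inner_smul_right,
    inner_single_one_single_one]
  split_ifs with h
  · rw [h]
  · simp

end Basis

variable {𝕜 : Type*} [RCLike 𝕜]

def IsWeightedBackwardShift (A : lp (fun _ : ℕ => 𝕜) 2 →L[𝕜] lp (fun _ : ℕ => 𝕜) 2) : Prop :=
  A (lp.single 2 0 1) = 0 ∧ ∀ k, ∃ s : 𝕜, A (lp.single 2 (k + 1) 1) = s • lp.single 2 k 1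

variable {A : lp (fun _ : ℕ => 𝕜) 2 →L[𝕜] lp (fun _ : ℕ => 𝕜) 2}

theorem IsWeightedBackwardShift.inner_single_pow_apply_single (hA : IsWeightedBackwardShift A)
    {j l k : ℕ} (h : j + l ≠ k) : ⟪lp.single 2 j (1 : 𝕜), (A ^ l) (lp.single 2 k 1)⟫_𝕜 = 0 := by
  induction l generalizing k with
  | zero => simpa [inner_single_one_single_one] using h
  | succ l ih =>
    rw [pow_succ, mul_apply_eq_comp]
    cases k with
    | zero => rw [hA.1, map_zero, inner_zero_right]
    | succ k =>
      obtain ⟨s, hs⟩ := hA.2 k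
      rw [hs, map_smul, inner_smul_right, ih (by omega), mul_zero]

theorem IsWeightedBackwardShift.inner_single_pow_apply_single_self
    (hA : IsWeightedBackwardShift A) (l k : ℕ) :
    ⟪lp.single 2 k (1 : 𝕜), (A ^ l) (lp.single 2 k 1)⟫_𝕜 = if l = 0 then 1 else 0 := by
  split_ifs with hl
  · simp [hl]
  · exact hA.inner_single_pow_apply_single (by omega)

end lp

section Monomial

variable {A C : lp (fun _ : ℕ => ℂ) 2 →L[ℂ] lp (fun _ : ℕ => ℂ) 2} {q : ℝ} {z : ℂ}

theorem inner_single_monomial_apply_single (hA : lp.IsWeightedBackwardShift A)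
    (hC : ∀ k, C (lp.single 2 k 1) = (z * q ^ k) • lp.single 2 k 1) (l n m k : ℕ) :
    ⟪lp.single 2 k (1 : ℂ), (A ^ l * C ^ n * star C ^ m) (lp.single 2 k 1)⟫_ℂ =
      (if l = 0 then 1 else 0) * (z ^ n * conj z ^ m) * ((q : ℂ) ^ k) ^ (n + m) := by
  have hCstar := lp.star_apply_single_of_apply_single hC k
  rw [map_mul, map_pow, Complex.conj_ofReal] at hCstar
  rw [mul_apply_eq_comp, mul_apply_eq_comp,
    ContinuousLinearMap.pow_apply_of_apply_eq_smul hCstar, map_smul,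
    ContinuousLinearMap.pow_apply_of_apply_eq_smul (hC k), map_smul, map_smul, inner_smul_right,
    inner_smul_right, hA.inner_single_pow_apply_single_self]
  ring

theorem tsum_inner_single_monomial_apply_single (hq : |q| < 1)
    (hA : lp.IsWeightedBackwardShift A)
    (hC : ∀ k, C (lp.single 2 k 1) = (z * q ^ k) • lp.single 2 k 1) (l n m : ℕ) :
    (1 - (q : ℂ) ^ 2) * ∑' k : ℕ, (q : ℂ) ^ (2 * k) *
        ⟪lp.single 2 k (1 : ℂ), (A ^ l * C ^ n * star C ^ m) (lp.single 2 k 1)⟫_ℂ =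
      (if l = 0 then 1 else 0) * (((1 - q ^ 2) / (1 - q ^ (n + m + 2)) : ℝ) : ℂ) *
        (z ^ n * conj z ^ m) := by
  have hratio : ‖(q : ℂ) ^ (n + m + 2)‖ < 1 := by
    rw [norm_pow, Complex.norm_real, Real.norm_eq_abs]
    exact pow_lt_one₀ (abs_nonneg q) hq (by omega)
  simp_rw [inner_single_monomial_apply_single hA hC]
  have hterm : ∀ k : ℕ, (q : ℂ) ^ (2 * k) *
      ((if l = 0 then 1 else 0) * (z ^ n * conj z ^ m) * ((q : ℂ) ^ k) ^ (n + m)) =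
      (if l = 0 then 1 else 0) * (z ^ n * conj z ^ m) * ((q : ℂ) ^ (n + m + 2)) ^ k := by
    intro k; ring
  rw [tsum_congr hterm, tsum_mul_left, tsum_geometric_of_norm_lt_one hratio]
  push_cast
  ring

end Monomial

theorem integral_exp_int_mul_mul_I (k : ℤ) :
    ∫ θ in (0 : ℝ)..(2 * Real.pi), Complex.exp (k * θ * Complex.I) =
      if k = 0 then (2 * Real.pi : ℂ) else 0 := by
  split_ifs with hk
  · simp [hk]
  · have hc : (k * Complex.I : ℂ) ≠ 0 := mul_ne_zero (by exact_mod_cast hk) Complex.I_ne_zero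
    simp_rw [mul_right_comm _ _ Complex.I]
    rw [integral_exp_mul_complex hc]
    have hperiod : (k * Complex.I : ℂ) * (2 * Real.pi : ℝ) = k * (2 * Real.pi * Complex.I) := by
      push_cast; ring
    rw [hperiod, Complex.exp_int_mul_two_pi_mul_I]
    simp

theorem integral_exp_mul_I_pow_mul_conj_pow (n m : ℕ) :
    ∫ θ in (0 : ℝ)..(2 * Real.pi),
        Complex.exp (θ * Complex.I) ^ n * conj (Complex.exp (θ * Complex.I)) ^ m =
      if n = m then (2 * Real.pi : ℂ) else 0 := by
  have hpow : ∀ θ : ℝ, Complex.exp (θ * Complex.I) ^ n * conj (Complex.exp (θ * Complex.I)) ^ m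
      = Complex.exp (((n - m : ℤ) : ℂ) * θ * Complex.I) := by
    intro θ
    rw [← Complex.exp_conj, map_mul, Complex.conj_ofReal, Complex.conj_I, ← Complex.exp_nat_mul,
      ← Complex.exp_nat_mul, ← Complex.exp_add]
    push_cast
    ring_nf
  simp_rw [hpow, integral_exp_int_mul_mul_I, sub_eq_zero, Nat.cast_inj]

theorem stmt_6_general (q : ℝ) (hq1 : |q| < 1)
    (A : lp (fun _ : ℕ => ℂ) 2 →L[ℂ] lp (fun _ : ℕ => ℂ) 2)
    (hA0 : A (lp.single 2 0 (1 : ℂ)) = 0)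
    (hA : ∀ k : ℕ, A (lp.single 2 (k + 1) (1 : ℂ)) =
      ((Real.sqrt (1 - q ^ (2 * (k + 1))) : ℝ) : ℂ) • lp.single 2 k (1 : ℂ))
    (C : ℝ → (lp (fun _ : ℕ => ℂ) 2 →L[ℂ] lp (fun _ : ℕ => ℂ) 2))
    (hC : ∀ (θ : ℝ) (k : ℕ), C θ (lp.single 2 k (1 : ℂ)) =
      (Complex.exp ((θ : ℂ) * Complex.I) * (q : ℂ) ^ k) • lp.single 2 k (1 : ℂ)) :
    ∀ l n m : ℕ,
      (1 / (2 * (Real.pi : ℂ))) *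
        ∫ θ in (0 : ℝ)..(2 * Real.pi),
          ((1 - (q : ℂ) ^ 2) * ∑' k : ℕ, (q : ℂ) ^ (2 * k) *
            (inner ℂ (lp.single 2 k (1 : ℂ))
              ((A ^ l * (C θ) ^ n * (star (C θ)) ^ m) (lp.single 2 k (1 : ℂ))) : ℂ)) =
      (if l = 0 then 1 else 0) * (if n = m then 1 else 0) *
        (((1 - q ^ 2) / (1 - q ^ (2 * (n + 1))) : ℝ) : ℂ) := by
  intro l n m
  have hshift : lp.IsWeightedBackwardShift A := ⟨hA0, fun k => ⟨_, hA k⟩⟩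
  simp_rw [tsum_inner_single_monomial_apply_single hq1 hshift (hC _),
    intervalIntegral.integral_const_mul, integral_exp_mul_I_pow_mul_conj_pow]
  have hπ : (Real.pi : ℂ) ≠ 0 := Complex.ofReal_ne_zero.mpr Real.pi_ne_zero
  split_ifs with hl hnm
  · subst hnm
    field_simp
    ring_nf
  all_goals simp

/-- Computation of the Haar state of `SU_q(2)` on the basis monomials
`α^l γ^n γ^{*m}` through the representations `ψ^{2,λ}`, the circle being
parametrized as `λ = exp(iθ)` with normalized Haar measure `dθ/(2π)`. -/
theorem stmt_6 (q : ℝ) (hq0 : 0 < |q|) (hq1 : |q| < 1)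
    (A : lp (fun _ : ℕ => ℂ) 2 →L[ℂ] lp (fun _ : ℕ => ℂ) 2)
    (hA0 : A (lp.single 2 0 (1 : ℂ)) = 0)
    (hA : ∀ k : ℕ, A (lp.single 2 (k + 1) (1 : ℂ)) =
      ((Real.sqrt (1 - q ^ (2 * (k + 1))) : ℝ) : ℂ) • lp.single 2 k (1 : ℂ))
    (C : ℝ → (lp (fun _ : ℕ => ℂ) 2 →L[ℂ] lp (fun _ : ℕ => ℂ) 2))
    (hC : ∀ (θ : ℝ) (k : ℕ), C θ (lp.single 2 k (1 : ℂ)) =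
      (Complex.exp ((θ : ℂ) * Complex.I) * (q : ℂ) ^ k) • lp.single 2 k (1 : ℂ)) :
    ∀ l n m : ℕ,
      (1 / (2 * (Real.pi : ℂ))) *
        ∫ θ in (0 : ℝ)..(2 * Real.pi),
          ((1 - (q : ℂ) ^ 2) * ∑' k : ℕ, (q : ℂ) ^ (2 * k) *
            (inner ℂ (lp.single 2 k (1 : ℂ))
              ((A ^ l * (C θ) ^ n * (star (C θ)) ^ m) (lp.single 2 k (1 : ℂ))) : ℂ)) =
      (if l = 0 then 1 else 0) * (if n = m then 1 else 0) *
        (((1 - q ^ 2) / (1 - q ^ (2 * (n + 1))) : ℝ) : ℂ) :=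
  stmt_6_general q hq1 A hA0 hA C hC
end

section
/- For all l, n, m, k, k' ∈ ℕ and μ = −sgn(q)·λ, one has ⟪e_{k'}, A^l C_λ^m (C_λ*)^n e_k⟫ = (−sgn q)^{m+n} · conj(⟪e_{k'}, A^l C_μ^n (C_μ*)^m e_k⟫). (This is the matrix-entry form of the identity ψ^{2,λ}(α^l γ^m γ^{*n}) = (−sgn q)^{m+n} j ψ^{2,−sgn(q)λ}(α^l γ^n γ^{*m}) j, where j is coordinatewise complex conjugation on ℓ²(ℕ); it underlies the description of the modular conjugation J_φ of the dual of SU_q(2) on the level of direct integrals.) -/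
/-!
On the basis, `C_ω` and `C_ω*` act diagonally with eigenvalues `ω qᵏ` and `conj ω · qᵏ`, so
`⟪e_{k'}, A^l C_ω^a (C_ω*)^b e_k⟫ = (ω qᵏ)^a (conj ω · qᵏ)^b ⟪e_{k'}, A^l e_k⟫`, and the last
factor is real because `A` is a weighted shift with real weights. Replacing `λ` by
`μ = s λ` with `s = -sgn q` multiplies the eigenvalues by the real sign `s`, and taking the complex
conjugate swaps the roles of `C_μ` and `C_μ*`; the powers of `s` that appear cancel since `s² = 1`.
-/

open scoped ComplexConjugate

theorem ContinuousLinearMap.pow_apply_of_apply_eq_smul_s8 {R M : Type*} [CommSemiring R]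
    [TopologicalSpace M] [AddCommMonoid M] [Module R M] {T : M →L[R] M} {c : R} {v : M}
    (hv : T v = c • v) (p : ℕ) : (T ^ p) v = c ^ p • v := by
  induction p with
  | zero => simp
  | succ p ih => rw [pow_succ, mul_apply_eq_comp, hv, map_smul, ih, smul_smul, pow_succ']

section Diagonal

variable {ι 𝕜 : Type*} [RCLike 𝕜] [DecidableEq ι]

theorem lp.star_apply_single_of_diagonal {T : lp (fun _ : ι => 𝕜) 2 →L[𝕜] lp (fun _ : ι => 𝕜) 2}
    {d : ι → 𝕜} (hT : ∀ j, T (lp.single 2 j 1) = d j • lp.single 2 j 1) (j : ι) :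
    star T (lp.single 2 j 1) = conj (d j) • lp.single 2 j 1 := by
  refine lp.ext (funext fun i => ?_)
  have h := ContinuousLinearMap.adjoint_inner_right T (lp.single 2 i 1) (lp.single 2 j 1)
  simp only [hT, inner_smul_left, lp.inner_single_left, RCLike.inner_apply, map_one, mul_one] at h
  rw [ContinuousLinearMap.star_eq_adjoint, lp.coeFn_smul, Pi.smul_apply, h]
  by_cases hij : i = j
  · subst hij; simp
  · simp [hij]

theorem lp.inner_mul_pow_mul_star_pow_apply_single_of_diagonal
    {B T : lp (fun _ : ι => 𝕜) 2 →L[𝕜] lp (fun _ : ι => 𝕜) 2} {d : ι → 𝕜}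
    (hT : ∀ j, T (lp.single 2 j 1) = d j • lp.single 2 j 1) (v : lp (fun _ : ι => 𝕜) 2)
    (a b : ℕ) (k : ι) :
    inner 𝕜 v ((B * T ^ a * star T ^ b) (lp.single 2 k 1)) =
      d k ^ a * conj (d k) ^ b * inner 𝕜 v (B (lp.single 2 k 1)) := by
  simp only [mul_apply_eq_comp,
    ContinuousLinearMap.pow_apply_of_apply_eq_smul_s8 (lp.star_apply_single_of_diagonal hT k),
    map_smul, ContinuousLinearMap.pow_apply_of_apply_eq_smul_s8 (hT k), inner_smul_right]
  ring

end Diagonal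

section WeightedShift

variable {A : lp (fun _ : ℕ => ℂ) 2 →L[ℂ] lp (fun _ : ℕ => ℂ) 2} {w : ℕ → ℝ}

theorem lp.exists_pow_apply_single_of_weightedShift (hA0 : A (lp.single 2 0 1) = 0)
    (hA : ∀ k, A (lp.single 2 (k + 1) 1) = (w k : ℂ) • lp.single 2 k 1) (l k : ℕ) :
    ∃ r : ℝ, (A ^ l) (lp.single 2 k 1) = (r : ℂ) • lp.single 2 (k - l) 1 := by
  induction l generalizing k with
  | zero => exact ⟨1, by simp⟩
  | succ l ih =>
    rw [pow_succ, mul_apply_eq_comp]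
    cases k with
    | zero => exact ⟨0, by simp [hA0]⟩
    | succ k =>
      obtain ⟨r, hr⟩ := ih k
      refine ⟨w k * r, ?_⟩
      rw [hA, map_smul, hr, smul_smul, Nat.add_sub_add_right, Complex.ofReal_mul]

theorem lp.conj_inner_single_pow_apply_single_of_weightedShift (hA0 : A (lp.single 2 0 1) = 0)
    (hA : ∀ k, A (lp.single 2 (k + 1) 1) = (w k : ℂ) • lp.single 2 k 1) (l k k' : ℕ) :
    conj (inner ℂ (lp.single 2 k' 1) ((A ^ l) (lp.single 2 k 1))) =
      inner ℂ (lp.single 2 k' (1 : ℂ)) ((A ^ l) (lp.single 2 k 1)) := by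
  obtain ⟨r, hr⟩ := lp.exists_pow_apply_single_of_weightedShift hA0 hA l k
  rw [hr, inner_smul_right, lp.inner_single_left]
  by_cases h : k' = k - l <;> simp [h]

end WeightedShift

theorem stmt_8_general (q : ℝ) (hq0 : q ≠ 0)
    (lam : ℂ)
    (A : lp (fun _ : ℕ => ℂ) 2 →L[ℂ] lp (fun _ : ℕ => ℂ) 2)
    (hA0 : A (lp.single 2 0 (1 : ℂ)) = 0)
    (hA : ∀ k : ℕ, A (lp.single 2 (k + 1) (1 : ℂ)) =
      ((Real.sqrt (1 - q ^ (2 * (k + 1))) : ℝ) : ℂ) • lp.single 2 k (1 : ℂ))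
    (C : ℂ → (lp (fun _ : ℕ => ℂ) 2 →L[ℂ] lp (fun _ : ℕ => ℂ) 2))
    (hC : ∀ (ω : ℂ) (k : ℕ), C ω (lp.single 2 k (1 : ℂ)) =
      (ω * (q : ℂ) ^ k) • lp.single 2 k (1 : ℂ)) :
    ∀ l n m k k' : ℕ,
      (inner ℂ (lp.single 2 k' (1 : ℂ))
          ((A ^ l * (C lam) ^ m * (star (C lam)) ^ n) (lp.single 2 k (1 : ℂ))) : ℂ) =
        ((-(Real.sign q) : ℝ) : ℂ) ^ (m + n) *
          (starRingEnd ℂ)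
            ((inner ℂ (lp.single 2 k' (1 : ℂ))
              ((A ^ l * (C (-(Real.sign q : ℂ) * lam)) ^ n *
                (star (C (-(Real.sign q : ℂ) * lam))) ^ m) (lp.single 2 k (1 : ℂ))) : ℂ)) := by
  intro l n m k k'
  set s : ℂ := -(Real.sign q : ℂ)
  have hs_cast : ((-(Real.sign q) : ℝ) : ℂ) = s := by push_cast; rfl
  have hs : s ^ 2 = 1 := by
    rcases Real.sign_apply_eq_of_ne_zero q hq0 with h | h <;> simp [s, h]
  have hconj_s : conj s = s := by simp [s, Complex.conj_ofReal]
  have hconj_q : conj ((q : ℂ) ^ k) = (q : ℂ) ^ k := by simp [Complex.conj_ofReal]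
  rw [lp.inner_mul_pow_mul_star_pow_apply_single_of_diagonal (hC lam),
    lp.inner_mul_pow_mul_star_pow_apply_single_of_diagonal (hC _), map_mul, map_mul,
    lp.conj_inner_single_pow_apply_single_of_weightedShift hA0 hA, hs_cast]
  simp only [map_pow, map_mul, Complex.conj_conj, hconj_s, hconj_q]
  have hs_pow : s ^ (m + n) * (s ^ n * s ^ m) = 1 := by
    rw [← pow_add, ← pow_add, show m + n + (n + m) = 2 * (m + n) by ring, pow_mul, hs, one_pow]
  linear_combination -((lam * (q : ℂ) ^ k) ^ m * (conj lam * (q : ℂ) ^ k) ^ n *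
    inner ℂ (lp.single 2 k' (1 : ℂ)) ((A ^ l) (lp.single 2 k 1))) * hs_pow

/-- Matrix-entry form of the identity
`ψ^{2,λ}(α^l γ^m γ^{*n}) = (−sgn q)^{m+n} j ψ^{2,−sgn(q)λ}(α^l γ^n γ^{*m}) j`,
where `j` is coordinatewise complex conjugation on `ℓ²(ℕ)`. -/
theorem stmt_8 (q : ℝ) (hq0 : q ≠ 0) (hq1 : |q| < 1)
    (lam : ℂ) (hlam : ‖lam‖ = 1)
    (A : lp (fun _ : ℕ => ℂ) 2 →L[ℂ] lp (fun _ : ℕ => ℂ) 2)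
    (hA0 : A (lp.single 2 0 (1 : ℂ)) = 0)
    (hA : ∀ k : ℕ, A (lp.single 2 (k + 1) (1 : ℂ)) =
      ((Real.sqrt (1 - q ^ (2 * (k + 1))) : ℝ) : ℂ) • lp.single 2 k (1 : ℂ))
    (C : ℂ → (lp (fun _ : ℕ => ℂ) 2 →L[ℂ] lp (fun _ : ℕ => ℂ) 2))
    (hC : ∀ (ω : ℂ) (k : ℕ), C ω (lp.single 2 k (1 : ℂ)) =
      (ω * (q : ℂ) ^ k) • lp.single 2 k (1 : ℂ)) :
    ∀ l n m k k' : ℕ,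
      (inner ℂ (lp.single 2 k' (1 : ℂ))
          ((A ^ l * (C lam) ^ m * (star (C lam)) ^ n) (lp.single 2 k (1 : ℂ))) : ℂ) =
        ((-(Real.sign q) : ℝ) : ℂ) ^ (m + n) *
          (starRingEnd ℂ)
            ((inner ℂ (lp.single 2 k' (1 : ℂ))
              ((A ^ l * (C (-(Real.sign q : ℂ) * lam)) ^ n *
                (star (C (-(Real.sign q : ℂ) * lam))) ^ m) (lp.single 2 k (1 : ℂ))) : ℂ)) :=
  stmt_8_general q hq0 lam A hA0 hA C hC
end

section
/- Let N be a nonzero even integer and let ρ ∈ ℂ with Re(ρ) < 0 and Im(ρ) = N/(2π). Let Γ = {exp((k + it)/ρ) : k ∈ ℤ, t ∈ ℝ} ⊆ ℂ. Then the closure of Γ in ℂ equals Γ ∪ {0}. -/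
/-!
Put `A = ρ⁻¹(ℤ + iℝ) = {w | Re(ρ w) ∈ ℤ}`, so that `Γ = exp A`. Since
`Re(2πi ρ) = -2π Im ρ = -N` is an integer, `A` is invariant under translation by `2πiℤ`,
the group of periods of `exp`. Hence `ℂ \ (Γ ∪ {0}) = exp (ℂ \ A)`, which is open because `A`
is closed and `exp` is an open map. Conversely
`exp (n / ρ) ∈ Γ` tends to `0` because `Re (1/ρ) < 0`.
-/

open Complex Filter Set

namespace Complex

theorem isClosed_exp_image_union_zero {A : Set ℂ} (hA : IsClosed A)
    (hper : ∀ a ∈ A, ∀ n : ℤ, a + n * (2 * Real.pi * I) ∈ A) :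
    IsClosed (exp '' A ∪ {0}) := by
  have hcompl : (exp '' A ∪ {0})ᶜ = exp '' Aᶜ := by
    ext z
    simp only [compl_union, mem_inter_iff, mem_compl_iff, mem_singleton_iff, mem_image]
    constructor
    · rintro ⟨hzA, hz⟩
      exact ⟨log z, fun hlog => hzA ⟨log z, hlog, exp_log hz⟩, exp_log hz⟩
    · rintro ⟨w, hw, rfl⟩
      refine ⟨?_, exp_ne_zero w⟩
      rintro ⟨a, ha, hexp⟩
      obtain ⟨n, rfl⟩ := exp_eq_exp_iff_exists_int.1 hexp.symm
      exact hw (hper a ha n)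
  rw [← isOpen_compl_iff, hcompl]
  exact isOpenMap_exp _ hA.isOpen_compl

theorem tendsto_exp_nat_mul_of_re_neg {c : ℂ} (hc : c.re < 0) :
    Tendsto (fun n : ℕ => exp (n * c)) atTop (nhds 0) := by
  simp_rw [exp_nat_mul]
  exact tendsto_pow_atTop_nhds_zero_of_norm_lt_one (by rwa [norm_exp, Real.exp_lt_one_iff])

theorem isClosed_setOf_re_mul_eq_int (ρ : ℂ) :
    IsClosed {w : ℂ | ∃ k : ℤ, (ρ * w).re = k} := by
  simpa only [preimage, mem_range, Function.comp_apply, eq_comm] using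
    Int.isClosedEmbedding_coe_real.isClosed_range.preimage
      (continuous_re.comp (continuous_const_mul ρ))

theorem exists_re_mul_add_int_mul_two_pi_I_eq_int {ρ w : ℂ} {N : ℤ}
    (hρim : ρ.im = N / (2 * Real.pi)) (hw : ∃ k : ℤ, (ρ * w).re = k) (n : ℤ) :
    ∃ k : ℤ, (ρ * (w + n * (2 * Real.pi * I))).re = k := by
  obtain ⟨k, hk⟩ := hw
  refine ⟨k - n * N, ?_⟩
  have hN : 2 * Real.pi * ρ.im = N := by rw [hρim]; field_simp
  simp only [mul_add, add_re, hk, mul_re, ofReal_re, ofReal_im, I_re, I_im, intCast_re,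
    intCast_im, mul_im, re_ofNat, im_ofNat]
  push_cast
  linear_combination (-(n : ℝ)) * hN

theorem exp_image_setOf_re_mul_eq_int {ρ : ℂ} (hρ : ρ ≠ 0) :
    exp '' {w : ℂ | ∃ k : ℤ, (ρ * w).re = k} =
      {z : ℂ | ∃ (k : ℤ) (t : ℝ), z = exp ((k + t * I) / ρ)} := by
  ext z
  constructor
  · rintro ⟨w, ⟨k, hk⟩, rfl⟩
    refine ⟨k, (ρ * w).im, ?_⟩
    rw [show (k : ℂ) = ((ρ * w).re : ℂ) by simp [hk], re_add_im, mul_div_cancel_left₀ w hρ]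
  · rintro ⟨k, t, rfl⟩
    exact ⟨_, ⟨k, by simp [mul_div_cancel₀ _ hρ]⟩, rfl⟩

end Complex

theorem stmt_13_general (N : ℤ) (ρ : ℂ)
    (hρre : ρ.re < 0) (hρim : ρ.im = (N : ℝ) / (2 * Real.pi)) :
    closure {z : ℂ | ∃ (k : ℤ) (t : ℝ),
        z = Complex.exp (((k : ℂ) + (t : ℂ) * Complex.I) / ρ)} =
      {z : ℂ | ∃ (k : ℤ) (t : ℝ),
        z = Complex.exp (((k : ℂ) + (t : ℂ) * Complex.I) / ρ)} ∪ {0} := by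
  have hρ : ρ ≠ 0 := fun h => by simp [h] at hρre
  rw [← exp_image_setOf_re_mul_eq_int hρ]
  have hclosed := isClosed_exp_image_union_zero (isClosed_setOf_re_mul_eq_int ρ)
    fun _ => exists_re_mul_add_int_mul_two_pi_I_eq_int hρim
  refine (closure_minimal subset_union_left hclosed).antisymm
    (union_subset subset_closure (singleton_subset_iff.2 ?_))
  have hinv : ρ⁻¹.re < 0 := by
    rw [inv_re]
    exact div_neg_of_neg_of_pos hρre (normSq_pos.2 hρ)
  refine mem_closure_of_tendsto (tendsto_exp_nat_mul_of_re_neg hinv)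
    (Eventually.of_forall fun n => ⟨n * ρ⁻¹, ⟨n, ?_⟩, rfl⟩)
  simp [mul_left_comm ρ, mul_inv_cancel₀ hρ]

/-- Case 3 of the parameter groups of the quantum az+b group: for `ρ ∈ ℂ` with
`Re ρ < 0` and `Im ρ = N/(2π)` (`N` a nonzero even integer), the closure of
`Γ = {exp((k+it)/ρ) : k ∈ ℤ, t ∈ ℝ}` in `ℂ` is `Γ ∪ {0}`. -/
theorem stmt_13 (N : ℤ) (hN0 : N ≠ 0) (hNeven : Even N) (ρ : ℂ)
    (hρre : ρ.re < 0) (hρim : ρ.im = (N : ℝ) / (2 * Real.pi)) :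
    closure {z : ℂ | ∃ (k : ℤ) (t : ℝ),
        z = Complex.exp (((k : ℂ) + (t : ℂ) * Complex.I) / ρ)} =
      {z : ℂ | ∃ (k : ℤ) (t : ℝ),
        z = Complex.exp (((k : ℂ) + (t : ℂ) * Complex.I) / ρ)} ∪ {0} :=
  stmt_13_general N ρ hρre hρim
end
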